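/- Let Ω ⊆ ℝⁿ be open and let K₁, K₂ ⊆ Ω be compact. Then the relative (p(·),ϑ)-capacity is strongly subadditive: cap_{p,ϑ}(K₁ ∪ K₂, Ω) + cap_{p,ϑ}(K₁ ∩ K₂, Ω) ≤ cap_{p,ϑ}(K₁, Ω) + cap_{p,ϑ}(K₂, Ω). -/

import Mathlib

/-!
Given test functions `f₁` for `K₁` and `f₂` for `K₂`, smoothed versions `M` of `max f₁ f₂` and
`m` of `min f₁ f₂` are test functions for `K₁ ∪ K₂` and `K₁ ∩ K₂`. Their gradients are
`t Df₁ + (1 - t) Df₂` and `(1 - t) Df₁ + t Df₂` for one and the same `t ∈ [0, 1]`, so convexity of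
`s ↦ s ^ p(x)` for `p ≥ 1` gives `|DM| ^ p + |Dm| ^ p ≤ |Df₁| ^ p + |Df₂| ^ p` pointwise. The
smoothing loses a little of `M ≥ 1` on `K₁ ∪ K₂`; this is paid for by first scaling `f₁, f₂` by
`c > 1`, at the price of a factor `c ^ p⁺` in the modular, and then letting `c → 1`.
-/

open MeasureTheory Metric Set Filter ENNReal

noncomputable section

/-- The weighted variable exponent modular `ρ_{p,ϑ,A}(g) = ∫_A |g|^{p(x)} ϑ(x) dx`. -/
def rhoMod {n : ℕ} (p ϑ : EuclideanSpace ℝ (Fin n) → ℝ)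
    (A : Set (EuclideanSpace ℝ (Fin n))) (g : EuclideanSpace ℝ (Fin n) → ℝ) : ℝ≥0∞ :=
  ∫⁻ x in A, ENNReal.ofReal (|g x| ^ p x * ϑ x)

/-- Relative `(p(·),ϑ)`-capacity of a compact set `K` with respect to an open set `Ω`:
the infimum of `ρ_{p,ϑ,Ω}(‖Df‖)` over `C¹` functions with compact support contained in `Ω`
which are `≥ 1` on `K` (with `sInf ∅ = ∞`). -/
def relCapK {n : ℕ} (p ϑ : EuclideanSpace ℝ (Fin n) → ℝ)
    (K Ω : Set (EuclideanSpace ℝ (Fin n))) : ℝ≥0∞ :=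
  sInf ((fun f => rhoMod p ϑ Ω fun x => ‖fderiv ℝ f x‖) ''
    {f : EuclideanSpace ℝ (Fin n) → ℝ |
      ContDiff ℝ 1 f ∧ IsCompact (tsupport f) ∧ tsupport f ⊆ Ω ∧ ∀ x ∈ K, 1 ≤ f x})

/-- Relative capacity of an open subset `U ⊆ Ω`. -/
def relCapO {n : ℕ} (p ϑ : EuclideanSpace ℝ (Fin n) → ℝ)
    (U Ω : Set (EuclideanSpace ℝ (Fin n))) : ℝ≥0∞ :=
  ⨆ (K : Set (EuclideanSpace ℝ (Fin n))) (_ : IsCompact K ∧ K ⊆ U), relCapK p ϑ K Ω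

/-- Relative capacity of an arbitrary subset `A ⊆ Ω`. -/
def relCap {n : ℕ} (p ϑ : EuclideanSpace ℝ (Fin n) → ℝ)
    (A Ω : Set (EuclideanSpace ℝ (Fin n))) : ℝ≥0∞ :=
  ⨅ (U : Set (EuclideanSpace ℝ (Fin n))) (_ : IsOpen U ∧ A ⊆ U ∧ U ⊆ Ω), relCapO p ϑ U Ω

/-- The Sobolev `(p(·),ϑ)`-capacity of `A ⊆ ℝⁿ`. -/
def sobCap {n : ℕ} (p ϑ : EuclideanSpace ℝ (Fin n) → ℝ)
    (A : Set (EuclideanSpace ℝ (Fin n))) : ℝ≥0∞ :=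
  sInf ((fun f => ∫⁻ x, ENNReal.ofReal ((|f x| ^ p x + ‖fderiv ℝ f x‖ ^ p x) * ϑ x)) ''
    {f : EuclideanSpace ℝ (Fin n) → ℝ |
      ContDiff ℝ 1 f ∧ ∃ U, IsOpen U ∧ A ⊆ U ∧ ∀ x ∈ U, 1 ≤ f x})

/-- The weighted measure `μ_ϑ(A) = ∫_A ϑ(x) dx`. -/
def muW {n : ℕ} (ϑ : EuclideanSpace ℝ (Fin n) → ℝ)
    (A : Set (EuclideanSpace ℝ (Fin n))) : ℝ≥0∞ :=
  ∫⁻ x in A, ENNReal.ofReal (ϑ x)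

/-- `μ_ϑ` is doubling with constant `cd`. -/
def DoublingW {n : ℕ} (ϑ : EuclideanSpace ℝ (Fin n) → ℝ) (cd : ℝ) : Prop :=
  1 ≤ cd ∧ ∀ (x : EuclideanSpace ℝ (Fin n)) (r : ℝ), 0 < r →
    muW ϑ (ball x (2 * r)) ≤ ENNReal.ofReal cd * muW ϑ (ball x r)

/-- Poincaré hypothesis with constant `c` for the weight `ϑ`. -/
def PoincareHyp {n : ℕ} (ϑ : EuclideanSpace ℝ (Fin n) → ℝ) (c : ℝ) : Prop :=
  ∀ Ω : Set (EuclideanSpace ℝ (Fin n)), IsOpen Ω → Bornology.IsBounded Ω →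
    ∀ f : EuclideanSpace ℝ (Fin n) → ℝ, ContDiff ℝ 1 f → IsCompact (tsupport f) →
      tsupport f ⊆ Ω →
      ∫ x in Ω, |f x| * ϑ x ≤ c * diam Ω * ∫ x in Ω, ‖fderiv ℝ f x‖ * ϑ x

/-- Embedding hypothesis `L^{p(·)}_ϑ(Ω) ↪ L¹_ϑ(Ω)` with constants `c₁ Ω`. -/
def EmbeddingHyp {n : ℕ} (p ϑ : EuclideanSpace ℝ (Fin n) → ℝ)
    (c₁ : Set (EuclideanSpace ℝ (Fin n)) → ℝ) : Prop :=
  ∀ Ω : Set (EuclideanSpace ℝ (Fin n)), IsOpen Ω → Bornology.IsBounded Ω →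
    0 < c₁ Ω ∧ ∀ g : EuclideanSpace ℝ (Fin n) → ℝ, Measurable g → 1 ≤ rhoMod p ϑ Ω g →
      (∫⁻ x in Ω, ENNReal.ofReal (|g x| * ϑ x)) ≤ ENNReal.ofReal (c₁ Ω) * rhoMod p ϑ Ω g

/-- The Wiener sum `W^{sum}_{p,ϑ}(A,x₀)`. -/
def wienerSum {n : ℕ} (p ϑ : EuclideanSpace ℝ (Fin n) → ℝ)
    (A : Set (EuclideanSpace ℝ (Fin n))) (x₀ : EuclideanSpace ℝ (Fin n)) : ℝ≥0∞ :=
  ∑' i : ℕ,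
    (relCap p ϑ (A ∩ ball x₀ ((2 : ℝ) ^ (-(i : ℤ)))) (ball x₀ ((2 : ℝ) ^ (1 - (i : ℤ)))) /
        relCap p ϑ (ball x₀ ((2 : ℝ) ^ (-(i : ℤ)))) (ball x₀ ((2 : ℝ) ^ (1 - (i : ℤ))))) ^
      (1 / (p x₀ - 1))

/-- The Wiener type integral `W_{p,ϑ}(A,x₀)`. -/
def wienerInt {n : ℕ} (p ϑ : EuclideanSpace ℝ (Fin n) → ℝ)
    (A : Set (EuclideanSpace ℝ (Fin n))) (x₀ : EuclideanSpace ℝ (Fin n)) : ℝ≥0∞ :=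
  ∫⁻ r in Set.Ioo (0 : ℝ) 1,
    (relCap p ϑ (A ∩ ball x₀ r) (ball x₀ (2 * r)) /
        relCap p ϑ (ball x₀ r) (ball x₀ (2 * r))) ^ (1 / (p x₀ - 1)) / ENNReal.ofReal r


open scoped Topology

lemma norm_smul_add_smul_rpow_le {F : Type*} [SeminormedAddCommGroup F] [NormedSpace ℝ F]
    {q a b : ℝ} (hq : 1 ≤ q) (ha : 0 ≤ a) (hb : 0 ≤ b) (hab : a + b = 1) (u v : F) :
    ‖a • u + b • v‖ ^ q ≤ a * ‖u‖ ^ q + b * ‖v‖ ^ q := by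
  have hnorm : ‖a • u + b • v‖ ≤ a • ‖u‖ + b • ‖v‖ :=
    (convexOn_norm convex_univ).2 (mem_univ u) (mem_univ v) ha hb hab
  calc ‖a • u + b • v‖ ^ q ≤ (a • ‖u‖ + b • ‖v‖) ^ q :=
        Real.rpow_le_rpow (norm_nonneg _) hnorm (by linarith)
    _ ≤ a • ‖u‖ ^ q + b • ‖v‖ ^ q :=
        (convexOn_rpow hq).2 (norm_nonneg u) (norm_nonneg v) ha hb hab
    _ = a * ‖u‖ ^ q + b * ‖v‖ ^ q := rfl

def smoothAbs (ε t : ℝ) : ℝ := √(t ^ 2 + ε ^ 2) - ε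

section SmoothAbs

variable {ε : ℝ}

lemma smoothAbs_zero (hε : 0 ≤ ε) : smoothAbs ε 0 = 0 := by
  simp [smoothAbs, Real.sqrt_sq hε]

lemma abs_sub_le_smoothAbs (ε t : ℝ) : |t| - ε ≤ smoothAbs ε t := by
  have : |t| ≤ √(t ^ 2 + ε ^ 2) := Real.abs_le_sqrt (le_add_of_nonneg_right (sq_nonneg ε))
  unfold smoothAbs; linarith

lemma smoothAbs_le_abs (hε : 0 ≤ ε) (t : ℝ) : smoothAbs ε t ≤ |t| := by
  have : √(t ^ 2 + ε ^ 2) ≤ |t| + ε :=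
    Real.sqrt_le_iff.2 ⟨by positivity, by nlinarith [sq_abs t, abs_nonneg t]⟩
  unfold smoothAbs; linarith

lemma hasDerivAt_smoothAbs (hε : ε ≠ 0) (t : ℝ) :
    HasDerivAt (smoothAbs ε) (t / √(t ^ 2 + ε ^ 2)) t := by
  have hpos : 0 < t ^ 2 + ε ^ 2 := by positivity
  refine ((((hasDerivAt_pow 2 t).add_const (ε ^ 2)).sqrt hpos.ne').sub_const ε).congr_deriv ?_
  field_simp
  norm_num

lemma contDiff_smoothAbs (hε : ε ≠ 0) {k : WithTop ℕ∞} : ContDiff ℝ k (smoothAbs ε) :=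
  (((contDiff_id.pow 2).add contDiff_const).sqrt fun t => by positivity).sub contDiff_const

lemma abs_deriv_smoothAbs_le (hε : ε ≠ 0) (t : ℝ) : |deriv (smoothAbs ε) t| ≤ 1 := by
  rw [(hasDerivAt_smoothAbs hε t).deriv, abs_div, abs_of_nonneg (Real.sqrt_nonneg _)]
  exact div_le_one_of_le₀ (Real.abs_le_sqrt (le_add_of_nonneg_right (sq_nonneg ε)))
    (Real.sqrt_nonneg _)

end SmoothAbs

/-- For `s = 1` a smooth approximation of `max f₁ f₂` from below, for `s = -1` one of
`min f₁ f₂` from above. -/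
def smoothComb {α : Type*} (ε s : ℝ) (f₁ f₂ : α → ℝ) (x : α) : ℝ :=
  (f₁ x + f₂ x + s * smoothAbs ε (f₁ x - f₂ x)) / 2

section SmoothComb

variable {α : Type*} {ε s : ℝ} {f₁ f₂ : α → ℝ}

lemma max_sub_le_smoothComb_one (x : α) :
    max (f₁ x) (f₂ x) - ε / 2 ≤ smoothComb ε 1 f₁ f₂ x := by
  have := abs_sub_le_smoothAbs ε (f₁ x - f₂ x)
  rw [max_def_lt (f₁ x)]
  unfold smoothComb
  split_ifs with h
  · rw [abs_of_neg (by linarith)] at this; linarith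
  · rw [abs_of_nonneg (by linarith)] at this; linarith

lemma min_le_smoothComb_neg_one (hε : 0 ≤ ε) (x : α) :
    min (f₁ x) (f₂ x) ≤ smoothComb ε (-1) f₁ f₂ x := by
  have := smoothAbs_le_abs hε (f₁ x - f₂ x)
  rw [min_def_lt]
  unfold smoothComb
  split_ifs with h
  · rw [abs_of_neg (by linarith)] at this; linarith
  · rw [abs_of_nonneg (by linarith)] at this; linarith

lemma support_smoothComb_subset (hε : 0 ≤ ε) :
    Function.support (smoothComb ε s f₁ f₂) ⊆ Function.support f₁ ∪ Function.support f₂ := by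
  intro x hx
  by_contra h
  simp only [mem_union, Function.mem_support, not_or, not_not] at h
  simp [smoothComb, h.1, h.2, smoothAbs_zero hε] at hx

lemma tsupport_smoothComb_subset [TopologicalSpace α] (hε : 0 ≤ ε) :
    tsupport (smoothComb ε s f₁ f₂) ⊆ tsupport f₁ ∪ tsupport f₂ :=
  (closure_mono (support_smoothComb_subset hε)).trans closure_union.le

end SmoothComb

section SmoothCombDeriv

variable {E : Type*} [NormedAddCommGroup E] [NormedSpace ℝ E] {ε s : ℝ} {f₁ f₂ : E → ℝ}

lemma contDiff_smoothComb {k : WithTop ℕ∞} (hε : ε ≠ 0) (h₁ : ContDiff ℝ k f₁)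
    (h₂ : ContDiff ℝ k f₂) : ContDiff ℝ k (smoothComb ε s f₁ f₂) :=
  ((h₁.add h₂).add (contDiff_const.mul ((contDiff_smoothAbs hε).comp (h₁.sub h₂)))).div_const 2

lemma hasFDerivAt_smoothComb {f₁' f₂' : E →L[ℝ] ℝ} {x : E} (hε : ε ≠ 0)
    (h₁ : HasFDerivAt f₁ f₁' x) (h₂ : HasFDerivAt f₂ f₂' x) :
    HasFDerivAt (smoothComb ε s f₁ f₂)
      (((1 + s * deriv (smoothAbs ε) (f₁ x - f₂ x)) / 2) • f₁' +
        ((1 - s * deriv (smoothAbs ε) (f₁ x - f₂ x)) / 2) • f₂') x := by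
  have hA := ((contDiff_smoothAbs hε (k := 1)).differentiable one_ne_zero
    (f₁ x - f₂ x)).hasDerivAt
  have h := ((h₁.add h₂).add ((hA.comp_hasFDerivAt x (h₁.sub h₂)).const_mul s)).const_mul
    (2⁻¹ : ℝ)
  have hfun : smoothComb ε s f₁ f₂ = fun y =>
      2⁻¹ * (f₁ y + f₂ y + s * smoothAbs ε (f₁ y - f₂ y)) := by
    funext y; rw [smoothComb]; ring
  rw [hfun]
  refine h.congr_fderiv ?_
  ext v
  simp only [smul_add, add_apply, smul_apply, smul_eq_mul, sub_apply]
  ring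

lemma fderiv_smoothComb {x : E} (hε : ε ≠ 0) (h₁ : DifferentiableAt ℝ f₁ x)
    (h₂ : DifferentiableAt ℝ f₂ x) :
    fderiv ℝ (smoothComb ε s f₁ f₂) x =
      ((1 + s * deriv (smoothAbs ε) (f₁ x - f₂ x)) / 2) • fderiv ℝ f₁ x +
        ((1 - s * deriv (smoothAbs ε) (f₁ x - f₂ x)) / 2) • fderiv ℝ f₂ x :=
  (hasFDerivAt_smoothComb hε h₁.hasFDerivAt h₂.hasFDerivAt).fderiv

lemma norm_fderiv_smoothComb_rpow_add_le {x : E} {q : ℝ} (hε : ε ≠ 0) (hq : 1 ≤ q)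
    (h₁ : DifferentiableAt ℝ f₁ x) (h₂ : DifferentiableAt ℝ f₂ x) :
    ‖fderiv ℝ (smoothComb ε 1 f₁ f₂) x‖ ^ q + ‖fderiv ℝ (smoothComb ε (-1) f₁ f₂) x‖ ^ q ≤
      ‖fderiv ℝ f₁ x‖ ^ q + ‖fderiv ℝ f₂ x‖ ^ q := by
  rw [fderiv_smoothComb hε h₁ h₂, fderiv_smoothComb hε h₁ h₂]
  set σ := deriv (smoothAbs ε) (f₁ x - f₂ x)
  obtain ⟨hσ₀, hσ₁⟩ := abs_le.1 (abs_deriv_smoothAbs_le hε (f₁ x - f₂ x))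
  have hmax := norm_smul_add_smul_rpow_le hq (a := (1 + 1 * σ) / 2) (b := (1 - 1 * σ) / 2)
    (by linarith) (by linarith) (by ring) (fderiv ℝ f₁ x) (fderiv ℝ f₂ x)
  have hmin := norm_smul_add_smul_rpow_le hq (a := (1 + -1 * σ) / 2) (b := (1 - -1 * σ) / 2)
    (by linarith) (by linarith) (by ring) (fderiv ℝ f₁ x) (fderiv ℝ f₂ x)
  linarith

end SmoothCombDeriv

def CapAdmissible {E : Type*} [NormedAddCommGroup E] [NormedSpace ℝ E] (K Ω : Set E)
    (f : E → ℝ) : Prop :=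
  ContDiff ℝ 1 f ∧ IsCompact (tsupport f) ∧ tsupport f ⊆ Ω ∧ ∀ x ∈ K, 1 ≤ f x

section CapAdmissible

variable {E : Type*} [NormedAddCommGroup E] [NormedSpace ℝ E] {K K₁ K₂ Ω : Set E}
  {f f₁ f₂ : E → ℝ}

lemma CapAdmissible.const_mul (hf : CapAdmissible K Ω f) {c : ℝ} (hc : 1 ≤ c) :
    CapAdmissible K Ω (fun x => c * f x) := by
  obtain ⟨hfd, hfc, hfΩ, hfK⟩ := hf
  have hsupp : tsupport (fun x => c * f x) ⊆ tsupport f := tsupport_mul_subset_right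
  refine ⟨contDiff_const.mul hfd, hfc.of_isClosed_subset (isClosed_tsupport _) hsupp,
    hsupp.trans hfΩ, fun x hx => one_le_mul_of_one_le_of_one_le hc (hfK x hx)⟩

lemma CapAdmissible.smoothComb (hf₁ : CapAdmissible K₁ Ω f₁) (hf₂ : CapAdmissible K₂ Ω f₂)
    {ε s : ℝ} (hε : 0 < ε) (hK : ∀ x ∈ K, 1 ≤ smoothComb ε s f₁ f₂ x) :
    CapAdmissible K Ω (smoothComb ε s f₁ f₂) :=
  ⟨contDiff_smoothComb hε.ne' hf₁.1 hf₂.1,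
    (hf₁.2.1.union hf₂.2.1).of_isClosed_subset (isClosed_tsupport _)
      (tsupport_smoothComb_subset hε.le),
    (tsupport_smoothComb_subset hε.le).trans (union_subset hf₁.2.2.1 hf₂.2.2.1), hK⟩

end CapAdmissible

section Capacity

variable {n : ℕ} {p ϑ : EuclideanSpace ℝ (Fin n) → ℝ} {A K Ω : Set (EuclideanSpace ℝ (Fin n))}

lemma relCapK_eq_iInf :
    relCapK p ϑ K Ω = ⨅ (f) (_ : CapAdmissible K Ω f), rhoMod p ϑ Ω fun x => ‖fderiv ℝ f x‖ :=
  sInf_image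

lemma relCapK_le_rhoMod {f : EuclideanSpace ℝ (Fin n) → ℝ} (hf : CapAdmissible K Ω f) :
    relCapK p ϑ K Ω ≤ rhoMod p ϑ Ω fun x => ‖fderiv ℝ f x‖ :=
  sInf_le ⟨f, hf, rfl⟩

lemma rhoMod_const_mul_le {g : EuclideanSpace ℝ (Fin n) → ℝ} {c P : ℝ} (hc : 1 ≤ c)
    (hpP : ∀ᵐ x ∂volume.restrict A, p x ≤ P) (hϑ₀ : ∀ᵐ x ∂volume.restrict A, 0 ≤ ϑ x) :
    rhoMod p ϑ A (fun x => c * g x) ≤ ENNReal.ofReal (c ^ P) * rhoMod p ϑ A g := by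
  rw [rhoMod, rhoMod, ← lintegral_const_mul' _ _ ENNReal.ofReal_ne_top]
  refine lintegral_mono_ae ?_
  filter_upwards [hpP, hϑ₀] with x hxP hxϑ
  have hg : 0 ≤ |g x| ^ p x * ϑ x := mul_nonneg (Real.rpow_nonneg (abs_nonneg _) _) hxϑ
  rw [← ENNReal.ofReal_mul (by positivity)]
  refine ENNReal.ofReal_le_ofReal ?_
  rw [abs_mul, abs_of_nonneg (by linarith), Real.mul_rpow (by linarith) (abs_nonneg _), mul_assoc]
  exact mul_le_mul_of_nonneg_right (Real.rpow_le_rpow_of_exponent_le hc hxP) hg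

lemma rhoMod_norm_fderiv_const_mul_le {f : EuclideanSpace ℝ (Fin n) → ℝ}
    (hf : Differentiable ℝ f) {c P : ℝ} (hc : 1 ≤ c) (hpP : ∀ᵐ x ∂volume.restrict A, p x ≤ P)
    (hϑ₀ : ∀ᵐ x ∂volume.restrict A, 0 ≤ ϑ x) :
    (rhoMod p ϑ A fun x => ‖fderiv ℝ (fun y => c * f y) x‖) ≤
      ENNReal.ofReal (c ^ P) * rhoMod p ϑ A fun x => ‖fderiv ℝ f x‖ := by
  have h : (fun x => ‖fderiv ℝ (fun y => c * f y) x‖) = fun x => c * ‖fderiv ℝ f x‖ := by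
    funext x
    rw [fderiv_const_mul (hf x), norm_smul, Real.norm_of_nonneg (by linarith)]
  rw [h]
  exact rhoMod_const_mul_le hc hpP hϑ₀

lemma rhoMod_add_rhoMod_le {g₁ g₂ h₁ h₂ : EuclideanSpace ℝ (Fin n) → ℝ} (hp : Measurable p)
    (hϑ : AEMeasurable ϑ (volume.restrict A)) (hh₁ : Measurable h₁)
    (hϑ₀ : ∀ᵐ x ∂volume.restrict A, 0 ≤ ϑ x)
    (hle : ∀ᵐ x ∂volume.restrict A,
      |g₁ x| ^ p x + |g₂ x| ^ p x ≤ |h₁ x| ^ p x + |h₂ x| ^ p x) :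
    rhoMod p ϑ A g₁ + rhoMod p ϑ A g₂ ≤ rhoMod p ϑ A h₁ + rhoMod p ϑ A h₂ := by
  have hmeas : AEMeasurable (fun x => ENNReal.ofReal (|h₁ x| ^ p x * ϑ x)) (volume.restrict A) :=
    ENNReal.measurable_ofReal.comp_aemeasurable ((hh₁.abs.pow hp).aemeasurable.mul hϑ)
  rw [rhoMod, rhoMod, rhoMod, rhoMod, ← lintegral_add_left' hmeas]
  refine (le_lintegral_add _ _).trans (lintegral_mono_ae ?_)
  filter_upwards [hϑ₀, hle] with x hxϑ hx
  have hnonneg : ∀ g : EuclideanSpace ℝ (Fin n) → ℝ, 0 ≤ |g x| ^ p x * ϑ x := fun g =>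
    mul_nonneg (Real.rpow_nonneg (abs_nonneg _) _) hxϑ
  rw [← ENNReal.ofReal_add (hnonneg _) (hnonneg _), ← ENNReal.ofReal_add (hnonneg _) (hnonneg _),
    ← add_mul, ← add_mul]
  exact ENNReal.ofReal_le_ofReal (mul_le_mul_of_nonneg_right hx hxϑ)

end Capacity

-- Real-valued `essInf` of a function that is not essentially bounded below is the junk value `0`.
lemma ae_lt_of_nonneg_of_lt_essInf {α : Type*} [MeasurableSpace α] {μ : Measure α} {f : α → ℝ}
    {a : ℝ} (ha : 0 ≤ a) (h : a < essInf f μ) : ∀ᵐ x ∂μ, a < f x := by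
  refine ae_lt_of_lt_essInf h ?_
  by_contra hf
  rw [essInf, Real.liminf_of_not_isBoundedUnder hf] at h
  linarith

lemma tendsto_ofReal_rpow_mul_nhdsGT_one (P : ℝ) (a : ℝ≥0∞) :
    Tendsto (fun c : ℝ => ENNReal.ofReal (c ^ P) * a) (𝓝[>] 1) (𝓝 a) := by
  have h : Tendsto (fun c : ℝ => ENNReal.ofReal (c ^ P)) (𝓝 1) (𝓝 1) := by
    simpa using ENNReal.tendsto_ofReal (continuousAt_id.rpow_const (Or.inl one_ne_zero)).tendsto
  simpa using ENNReal.Tendsto.mul_const (h.mono_left nhdsWithin_le_nhds) (Or.inl one_ne_zero)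

section StrongSubadditivity

variable {n : ℕ} {p ϑ : EuclideanSpace ℝ (Fin n) → ℝ} {K₁ K₂ Ω : Set (EuclideanSpace ℝ (Fin n))}
  {f₁ f₂ : EuclideanSpace ℝ (Fin n) → ℝ}

lemma relCapK_union_add_relCapK_inter_le_of_lt (hp : Measurable p)
    (hp₁ : ∀ᵐ x ∂volume.restrict Ω, 1 ≤ p x) (hϑ : AEMeasurable ϑ (volume.restrict Ω))
    (hϑ₀ : ∀ᵐ x ∂volume.restrict Ω, 0 ≤ ϑ x) (hf₁ : CapAdmissible K₁ Ω f₁)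
    (hf₂ : CapAdmissible K₂ Ω f₂) {c : ℝ} (hc : 1 < c) (hcf₁ : ∀ x ∈ K₁, c ≤ f₁ x)
    (hcf₂ : ∀ x ∈ K₂, c ≤ f₂ x) :
    relCapK p ϑ (K₁ ∪ K₂) Ω + relCapK p ϑ (K₁ ∩ K₂) Ω ≤
      (rhoMod p ϑ Ω fun x => ‖fderiv ℝ f₁ x‖) + rhoMod p ϑ Ω fun x => ‖fderiv ℝ f₂ x‖ := by
  -- smoothing with `ε = 2 (c - 1)` lowers the maximum by at most `c - 1`, absorbed by `f₁, f₂ ≥ c`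
  have hε : 0 < 2 * (c - 1) := by linarith
  have hmax : CapAdmissible (K₁ ∪ K₂) Ω (smoothComb (2 * (c - 1)) 1 f₁ f₂) :=
    hf₁.smoothComb hf₂ hε fun x hx => by
      have h := max_sub_le_smoothComb_one (ε := 2 * (c - 1)) (f₁ := f₁) (f₂ := f₂) x
      rcases hx with hx | hx
      · linarith [le_max_left (f₁ x) (f₂ x), hcf₁ x hx]
      · linarith [le_max_right (f₁ x) (f₂ x), hcf₂ x hx]
  have hmin : CapAdmissible (K₁ ∩ K₂) Ω (smoothComb (2 * (c - 1)) (-1) f₁ f₂) :=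
    hf₁.smoothComb hf₂ hε fun x hx =>
      (le_min (hf₁.2.2.2 x hx.1) (hf₂.2.2.2 x hx.2)).trans (min_le_smoothComb_neg_one hε.le x)
  have hd₁ := hf₁.1.differentiable one_ne_zero
  have hd₂ := hf₂.1.differentiable one_ne_zero
  calc _ ≤ _ := add_le_add (relCapK_le_rhoMod hmax) (relCapK_le_rhoMod hmin)
    _ ≤ _ := by
      refine rhoMod_add_rhoMod_le hp hϑ (hf₁.1.continuous_fderiv one_ne_zero).norm.measurable
        hϑ₀ ?_
      filter_upwards [hp₁] with x hx
      simpa only [abs_norm] using norm_fderiv_smoothComb_rpow_add_le hε.ne' hx (hd₁ x) (hd₂ x)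

lemma relCapK_union_add_relCapK_inter_le_rpow_mul (hp : Measurable p)
    (hp₁ : ∀ᵐ x ∂volume.restrict Ω, 1 ≤ p x) {P : ℝ} (hpP : ∀ᵐ x ∂volume.restrict Ω, p x ≤ P)
    (hϑ : AEMeasurable ϑ (volume.restrict Ω)) (hϑ₀ : ∀ᵐ x ∂volume.restrict Ω, 0 ≤ ϑ x)
    (hf₁ : CapAdmissible K₁ Ω f₁) (hf₂ : CapAdmissible K₂ Ω f₂) {c : ℝ} (hc : 1 < c) :
    relCapK p ϑ (K₁ ∪ K₂) Ω + relCapK p ϑ (K₁ ∩ K₂) Ω ≤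
      ENNReal.ofReal (c ^ P) *
        ((rhoMod p ϑ Ω fun x => ‖fderiv ℝ f₁ x‖) + rhoMod p ϑ Ω fun x => ‖fderiv ℝ f₂ x‖) := by
  have hc₀ : 0 ≤ c := by linarith
  rw [mul_add]
  calc _ ≤ _ := relCapK_union_add_relCapK_inter_le_of_lt hp hp₁ hϑ hϑ₀
        (hf₁.const_mul hc.le) (hf₂.const_mul hc.le) hc
        (fun x hx => le_mul_of_one_le_right hc₀ (hf₁.2.2.2 x hx))
        (fun x hx => le_mul_of_one_le_right hc₀ (hf₂.2.2.2 x hx))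
    _ ≤ _ := add_le_add
        (rhoMod_norm_fderiv_const_mul_le (hf₁.1.differentiable one_ne_zero) hc.le hpP hϑ₀)
        (rhoMod_norm_fderiv_const_mul_le (hf₂.1.differentiable one_ne_zero) hc.le hpP hϑ₀)

end StrongSubadditivity

theorem stmt3_general (n : ℕ) (p ϑ : EuclideanSpace ℝ (Fin n) → ℝ)
    (hp : Measurable p)
    (hpm : 1 < essInf p (volume : Measure (EuclideanSpace ℝ (Fin n))))
    (hpb : Filter.IsBoundedUnder (· ≤ ·) (ae (volume : Measure (EuclideanSpace ℝ (Fin n)))) p)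
    (hϑpos : ∀ x, 0 < ϑ x)
    (hϑloc : LocallyIntegrable ϑ (volume : Measure (EuclideanSpace ℝ (Fin n))))
    (Ω K₁ K₂ : Set (EuclideanSpace ℝ (Fin n))) :
    relCapK p ϑ (K₁ ∪ K₂) Ω + relCapK p ϑ (K₁ ∩ K₂) Ω ≤
      relCapK p ϑ K₁ Ω + relCapK p ϑ K₂ Ω := by
  obtain ⟨P, hpP⟩ := hpb
  have hp₁ : ∀ᵐ x, 1 ≤ p x := (ae_lt_of_nonneg_of_lt_essInf zero_le_one hpm).mono fun _ h => h.le
  have hϑ₀ : ∀ᵐ x ∂volume.restrict Ω, 0 ≤ ϑ x := ae_of_all _ fun x => (hϑpos x).le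
  rw [relCapK_eq_iInf (K := K₁), relCapK_eq_iInf (K := K₂)]
  refine ENNReal.le_iInf₂_add_iInf₂ fun f₁ hf₁ f₂ hf₂ =>
    ge_of_tendsto (tendsto_ofReal_rpow_mul_nhdsGT_one P _) ?_
  filter_upwards [self_mem_nhdsWithin] with c hc
  exact relCapK_union_add_relCapK_inter_le_rpow_mul hp (ae_restrict_of_ae hp₁)
    (ae_restrict_of_ae hpP) hϑloc.aestronglyMeasurable.aemeasurable.restrict hϑ₀ hf₁ hf₂ hc

/-- Strong subadditivity of the relative `(p(·),ϑ)`-capacity on compact sets. -/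
theorem stmt3 (n : ℕ) (hn : 1 ≤ n) (p ϑ : EuclideanSpace ℝ (Fin n) → ℝ)
    (hp : Measurable p)
    (hpm : 1 < essInf p (volume : Measure (EuclideanSpace ℝ (Fin n))))
    (hpb : Filter.IsBoundedUnder (· ≤ ·) (ae (volume : Measure (EuclideanSpace ℝ (Fin n)))) p)
    (hϑpos : ∀ x, 0 < ϑ x)
    (hϑloc : LocallyIntegrable ϑ (volume : Measure (EuclideanSpace ℝ (Fin n))))
    (Ω K₁ K₂ : Set (EuclideanSpace ℝ (Fin n))) (hΩ : IsOpen Ω)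
    (hK₁ : IsCompact K₁) (hK₂ : IsCompact K₂) (hK₁Ω : K₁ ⊆ Ω) (hK₂Ω : K₂ ⊆ Ω) :
    relCapK p ϑ (K₁ ∪ K₂) Ω + relCapK p ϑ (K₁ ∩ K₂) Ω ≤
      relCapK p ϑ K₁ Ω + relCapK p ϑ K₂ Ω :=
  stmt3_general n p ϑ hp hpm hpb hϑpos hϑloc Ω K₁ K₂
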